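/- arXiv:1403.3741 — 4 statements merged into one kernel-verified Lean document; each statement's English description precedes it below -/
import Mathlib

section
/- Let Y be a finite nonempty set, let p be a probability mass function on Y, and let X₁, …, Xₙ be independent random variables each distributed according to p. Define the empirical distribution p̂ₙ(y) := (1/n)·|{i ∈ {1,…,n} : Xᵢ = y}|. Then for every ε > 0, ℙ( Σ_{y∈Y} |p(y) − p̂ₙ(y)| ≥ ε ) ≤ exp( |Y|·log 2 − n·ε²/2 ) = 2^{|Y|} · exp(−n·ε²/2). -/
open MeasureTheory ProbabilityTheory Finset
open scoped Classical

/-!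
The L1 norm is a maximum of linear functionals: `‖q‖₁ = ∑ y, s y * q y` for the sign vector
`s = ±1` of `q`. For a fixed `s ∈ {±1}^Y`, `n * ∑ y, s y * (p̂ₙ y - p y)` is the centred sum of
the `n` independent variables `s (Xᵢ) ∈ [-1, 1]`, so Hoeffding's inequality bounds the probability
that it exceeds `n ε` by `exp (-n ε² / 2)`. A union bound over the `2 ^ |Y|` sign vectors finishes.
-/

section

variable {Ω : Type*} [MeasurableSpace Ω] {P : Measure Ω}

theorem measureReal_sum_sub_integral_ge_le [IsProbabilityMeasure P] {ι : Type*} [Fintype ι]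
    {Z : ι → Ω → ℝ} (hindep : iIndepFun Z P) (hmeas : ∀ i, Measurable (Z i)) {a b : ℝ}
    (hbound : ∀ i ω, Z i ω ∈ Set.Icc a b) {t : ℝ} (ht : 0 ≤ t) :
    P.real {ω | t ≤ ∑ i, (Z i ω - P[Z i])} ≤
      Real.exp (-2 * t ^ 2 / (Fintype.card ι * (b - a) ^ 2)) := by
  have hcentered : iIndepFun (fun i ω ↦ Z i ω - P[Z i]) P :=
    hindep.comp (fun i (x : ℝ) ↦ x - ∫ ω, Z i ω ∂P) fun _ ↦ measurable_id.sub_const _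
  have hsubG : ∀ i ∈ (univ : Finset ι),
      HasSubgaussianMGF (fun ω ↦ Z i ω - P[Z i]) ((‖b - a‖₊ / 2) ^ 2) P :=
    fun i _ ↦ hasSubgaussianMGF_of_mem_Icc (hmeas i).aemeasurable (ae_of_all _ (hbound i))
  refine (HasSubgaussianMGF.measure_sum_ge_le_of_iIndepFun hcentered hsubG ht).trans_eq ?_
  congr 1
  simp only [sum_const, card_univ, nsmul_eq_mul, NNReal.coe_mul, NNReal.coe_natCast,
    NNReal.coe_pow, NNReal.coe_div, coe_nnnorm, Real.norm_eq_abs, NNReal.coe_ofNat, div_pow,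
    sq_abs]
  rw [show (2 : ℝ) * (Fintype.card ι * ((b - a) ^ 2 / 2 ^ 2)) = Fintype.card ι * (b - a) ^ 2 / 2 by
    ring, div_div_eq_mul_div]
  ring

theorem integral_comp_eq_sum_measureReal_preimage_mul [IsFiniteMeasure P]
    {Y : Type*} [Fintype Y] [MeasurableSpace Y] [MeasurableSingletonClass Y]
    {X : Ω → Y} (hX : Measurable X) (f : Y → ℝ) :
    ∫ ω, f (X ω) ∂P = ∑ y, P.real (X ⁻¹' {y}) * f y := by
  rw [← integral_map hX.aemeasurable (measurable_of_finite f).aestronglyMeasurable,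
    integral_fintype .of_finite]
  simp [map_measureReal_apply hX (measurableSet_singleton _)]

end

section SignVectors

variable {Y : Type*}

noncomputable def signVector (A : Finset Y) (y : Y) : ℝ := if y ∈ A then 1 else -1

theorem signVector_mem_Icc (A : Finset Y) (y : Y) : signVector A y ∈ Set.Icc (-1) 1 := by
  unfold signVector; split_ifs <;> norm_num

theorem sum_abs_eq_sum_signVector_mul [Fintype Y] (d : Y → ℝ) :
    ∑ y, |d y| = ∑ y, signVector {y | 0 ≤ d y} y * d y := by
  refine sum_congr rfl fun y _ ↦ ?_
  by_cases hy : 0 ≤ d y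
  · simp [signVector, hy, abs_of_nonneg hy]
  · simp [signVector, hy, abs_of_neg (not_le.mp hy)]

end SignVectors

section Empirical

variable {Y : Type*} [Fintype Y] {n : ℕ}

noncomputable def empiricalDist (x : Fin n → Y) (y : Y) : ℝ :=
  (1 / n : ℝ) * #(univ.filter fun i ↦ x i = y)

theorem sum_mul_empiricalDist (x : Fin n → Y) (f : Y → ℝ) :
    ∑ y, f y * empiricalDist x y = (1 / n : ℝ) * ∑ i, f (x i) := by
  simp only [empiricalDist, mul_left_comm _ (1 / n : ℝ), ← mul_sum]
  rw [← sum_fiberwise univ x]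
  congr 1
  refine sum_congr rfl fun y _ ↦ ?_
  rw [sum_congr rfl fun i hi ↦ congrArg f (mem_filter.mp hi).2, sum_const, nsmul_eq_mul,
    mul_comm]

theorem sum_mul_empiricalDist_sub (hn : n ≠ 0) (x : Fin n → Y) (f p : Y → ℝ) :
    ∑ y, f y * (empiricalDist x y - p y) = (1 / n : ℝ) * ∑ i, (f (x i) - ∑ y, p y * f y) := by
  have hn' : (n : ℝ) ≠ 0 := Nat.cast_ne_zero.mpr hn
  simp only [mul_sub, sum_sub_distrib, sum_mul_empiricalDist, sum_const, card_univ,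
    Fintype.card_fin, nsmul_eq_mul, mul_comm (f _) (p _)]
  field_simp

end Empirical

theorem weissman_l1_concentration_general
    {Ω : Type*} [MeasurableSpace Ω] (P : Measure Ω) [IsProbabilityMeasure P]
    {Y : Type*} [Fintype Y] [MeasurableSpace Y] [MeasurableSingletonClass Y]
    (p : Y → ℝ) (hp0 : ∀ y, 0 ≤ p y)
    (n : ℕ) (hn : 0 < n) (X : Fin n → Ω → Y)
    (hmeas : ∀ i, Measurable (X i))
    (hindep : iIndepFun X P)
    (hlaw : ∀ i y, P {ω | X i ω = y} = ENNReal.ofReal (p y))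
    (ε : ℝ) (hε : 0 < ε) :
    P {ω | ε ≤ ∑ y, |p y - (1 / n : ℝ) * ((univ.filter (fun i => X i ω = y)).card : ℝ)|}
      ≤ ENNReal.ofReal (Real.exp ((Fintype.card Y : ℝ) * Real.log 2 - n * ε ^ 2 / 2)) := by
  have hn' : (0 : ℝ) < n := Nat.cast_pos.mpr hn
  let S : Finset Y → Set Ω := fun A ↦
    {ω | n * ε ≤ ∑ i, (signVector A (X i ω) - ∫ ω', signVector A (X i ω') ∂P)}
  have hmean : ∀ A i, ∫ ω, signVector A (X i ω) ∂P = ∑ y, p y * signVector A y := fun A i ↦ by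
    rw [integral_comp_eq_sum_measureReal_preimage_mul (hmeas i)]
    refine sum_congr rfl fun y _ ↦ ?_
    rw [measureReal_def, ← ENNReal.toReal_ofReal (hp0 y), ← hlaw]
    rfl
  have hcover : {ω | ε ≤ ∑ y, |p y - (1 / n : ℝ) * ((univ.filter (fun i => X i ω = y)).card : ℝ)|}
      ⊆ ⋃ A, S A := fun ω (hω : ε ≤ ∑ y, |p y - empiricalDist (X · ω) y|) ↦ by
    let A : Finset Y := {y | 0 ≤ empiricalDist (X · ω) y - p y}
    have hdev : ε ≤ (1 / n : ℝ) * ∑ i, (signVector A (X i ω) - ∫ ω', signVector A (X i ω') ∂P) :=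
      calc ε ≤ ∑ y, |p y - empiricalDist (X · ω) y| := hω
        _ = ∑ y, |empiricalDist (X · ω) y - p y| := sum_congr rfl fun y _ ↦ abs_sub_comm _ _
        _ = ∑ y, signVector A y * (empiricalDist (X · ω) y - p y) :=
          sum_abs_eq_sum_signVector_mul _
        _ = _ := by simp only [sum_mul_empiricalDist_sub hn.ne', hmean]
    rw [one_div_mul_eq_div, le_div_iff₀ hn', mul_comm] at hdev
    exact Set.mem_iUnion.2 ⟨A, hdev⟩
  have htail : ∀ A, P (S A) ≤ ENNReal.ofReal (Real.exp (-(n * ε ^ 2 / 2))) := fun A ↦ by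
    rw [ENNReal.le_ofReal_iff_toReal_le (measure_ne_top _ _) (Real.exp_pos _).le]
    refine (measureReal_sum_sub_integral_ge_le
      (hindep.comp (fun _ ↦ signVector A) fun _ ↦ measurable_of_finite _)
      (fun i ↦ (measurable_of_finite _).comp (hmeas i)) (fun _ _ ↦ signVector_mem_Icc A _)
      (by positivity)).trans_eq ?_
    congr 1
    simp only [Fintype.card_fin]
    field_simp
    norm_num
  calc _ ≤ ∑ A, P (S A) := (measure_mono hcover).trans (measure_iUnion_fintype_le _ _)
    _ ≤ ∑ _A : Finset Y, ENNReal.ofReal (Real.exp (-(n * ε ^ 2 / 2))) :=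
      sum_le_sum fun A _ ↦ htail A
    _ = _ := by
      rw [sum_const, card_univ, Fintype.card_finset, nsmul_eq_mul, sub_eq_add_neg, Real.exp_add,
        ENNReal.ofReal_mul (Real.exp_pos _).le, Real.exp_nat_mul, Real.exp_log two_pos]
      norm_num

/-- Lemma 2 (Weissman-style L1 concentration): for i.i.d. samples X₁,…,Xₙ from a pmf p on a
finite set Y, the L1 deviation of the empirical distribution from p satisfies
ℙ(‖p − p̂ₙ‖₁ ≥ ε) ≤ exp(|Y|·log 2 − n·ε²/2) = 2^{|Y|}·exp(−n·ε²/2). -/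
theorem weissman_l1_concentration
    {Ω : Type*} [MeasurableSpace Ω] (P : Measure Ω) [IsProbabilityMeasure P]
    {Y : Type*} [Fintype Y] [Nonempty Y] [MeasurableSpace Y] [MeasurableSingletonClass Y]
    (p : Y → ℝ) (hp0 : ∀ y, 0 ≤ p y) (hp1 : ∑ y, p y = 1)
    (n : ℕ) (hn : 0 < n) (X : Fin n → Ω → Y)
    (hmeas : ∀ i, Measurable (X i))
    (hindep : iIndepFun X P)
    (hlaw : ∀ i y, P {ω | X i ω = y} = ENNReal.ofReal (p y))
    (ε : ℝ) (hε : 0 < ε) :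
    P {ω | ε ≤ ∑ y, |p y - (1 / n : ℝ) * ((univ.filter (fun i => X i ω = y)).card : ℝ)|}
      ≤ ENNReal.ofReal (Real.exp ((Fintype.card Y : ℝ) * Real.log 2 - n * ε ^ 2 / 2)) :=
  weissman_l1_concentration_general P p hp0 n hn X hmeas hindep hlaw ε hε
end

section
/- Let X be a finite set and x₁, …, x_T a sequence of elements of X, and for t ∈ {1,…,T} and x ∈ X define the visit count n_t(x) := |{s ∈ {1,…,t−1} : x_s = x}|. Fix d > 0 and ε > 0, and set h(d,ε) := √( d·ε² / (d + ε²) ). Then |{ t ∈ {1,…,T} : n_t(x_t) = 0 or d > n_t(x_t)·h(d,ε)² }| ≤ |{ t ∈ {1,…,T} : n_t(x_t) = 0 or d > n_t(x_t)·ε² }| + |X|. -/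
open Finset
open scoped Classical

/-- Lemma 4 (Concentration results for √(d/n_t(x))): with n_t(x) := |{s < t : x_s = x}|
and h(d,ε) := √(dε²/(d+ε²)), the number of times t ≤ T with √(d/n_t(x_t)) > h(d,ε)
(interpreting √(d/0) = +∞) exceeds the number of times with √(d/n_t(x_t)) > ε by at
most |X|.  The condition √(d/n) > c is written as n = 0 ∨ d > n·c². -/
theorem count_large_ratio_le
    {X : Type*} [Fintype X] (T : ℕ) (x : ℕ → X) (d ε : ℝ) (hd : 0 < d) (hε : 0 < ε) :
    ((Finset.Icc 1 T).filter (fun t =>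
        ((Finset.Ico 1 t).filter (fun s => x s = x t)).card = 0 ∨
        d > (((Finset.Ico 1 t).filter (fun s => x s = x t)).card : ℝ)
              * (d * ε ^ 2 / (d + ε ^ 2)))).card
    ≤ ((Finset.Icc 1 T).filter (fun t =>
        ((Finset.Ico 1 t).filter (fun s => x s = x t)).card = 0 ∨
        d > (((Finset.Ico 1 t).filter (fun s => x s = x t)).card : ℝ) * ε ^ 2)).card
      + Fintype.card X := by
  set c : ℕ → ℕ := fun t => ((Finset.Ico 1 t).filter (fun s => x s = x t)).card with hc
  set A := (Finset.Icc 1 T).filter (fun t =>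
      c t = 0 ∨ d > (c t : ℝ) * (d * ε ^ 2 / (d + ε ^ 2))) with hA
  set B := (Finset.Icc 1 T).filter (fun t =>
      c t = 0 ∨ d > (c t : ℝ) * ε ^ 2) with hB
  have hde : (0:ℝ) < d + ε ^ 2 := by positivity
  -- key facts about elements of A \ B
  have hmem : ∀ t ∈ A \ B, 1 ≤ t ∧ t ≤ T ∧ d ≤ (c t : ℝ) * ε ^ 2 ∧
      (c t : ℝ) * ε ^ 2 < d + ε ^ 2 := by
    intro t ht
    rw [Finset.mem_sdiff, hA, hB, Finset.mem_filter, Finset.mem_filter] at ht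
    obtain ⟨⟨htT, hP⟩, hQ⟩ := ht
    rw [Finset.mem_Icc] at htT
    have hnQ : ¬(c t = 0 ∨ d > (c t : ℝ) * ε ^ 2) := fun h => hQ ⟨Finset.mem_Icc.mpr htT, h⟩
    push_neg at hnQ
    obtain ⟨hc0, hle⟩ := hnQ
    have hP' : d > (c t : ℝ) * (d * ε ^ 2 / (d + ε ^ 2)) := by
      rcases hP with h | h
      · exact absurd h hc0
      · exact h
    refine ⟨htT.1, htT.2, hle, ?_⟩
    have h2 := mul_lt_mul_of_pos_right hP' hde
    have h3 : (c t : ℝ) * (d * ε ^ 2 / (d + ε ^ 2)) * (d + ε ^ 2) = (c t : ℝ) * (d * ε ^ 2) := by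
      field_simp
    rw [h3] at h2
    nlinarith [h2, hd]
  -- counts strictly increase along visits to the same point
  have hkey : ∀ t₁ ∈ A \ B, ∀ t₂ ∈ A \ B, x t₁ = x t₂ → t₁ < t₂ → False := by
    intro t₁ ht₁ t₂ ht₂ hx hlt
    obtain ⟨h11, _, h13, _⟩ := hmem t₁ ht₁
    obtain ⟨_, _, _, h24⟩ := hmem t₂ ht₂
    have hsub : insert t₁ ((Finset.Ico 1 t₁).filter (fun s => x s = x t₁)) ⊆
        (Finset.Ico 1 t₂).filter (fun s => x s = x t₂) := by
      intro s hs
      rw [Finset.mem_insert] at hs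
      rcases hs with rfl | hs
      · exact Finset.mem_filter.mpr ⟨Finset.mem_Ico.mpr ⟨h11, hlt⟩, hx⟩
      · rw [Finset.mem_filter, Finset.mem_Ico] at hs
        exact Finset.mem_filter.mpr ⟨Finset.mem_Ico.mpr ⟨hs.1.1, hs.1.2.trans hlt⟩,
          hs.2.trans hx⟩
    have hnot : t₁ ∉ (Finset.Ico 1 t₁).filter (fun s => x s = x t₁) := by
      simp [Finset.mem_Ico]
    have hcard : c t₁ + 1 ≤ c t₂ := by
      have := Finset.card_le_card hsub
      rwa [Finset.card_insert_of_notMem hnot] at this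
    have : (c t₁ : ℝ) + 1 ≤ (c t₂ : ℝ) := by exact_mod_cast hcard
    nlinarith [h13, h24, this, sq_nonneg ε, hε]
  have hAB : (A \ B).card ≤ Fintype.card X := by
    rw [← Finset.card_univ]
    apply Finset.card_le_card_of_injOn (fun t => x t) (fun _ _ => Finset.mem_univ _)
    intro t₁ ht₁ t₂ ht₂ hx
    rcases lt_trichotomy t₁ t₂ with h | h | h
    · exact absurd (hkey t₁ ht₁ t₂ ht₂ hx h) (fun h => h)
    · exact h
    · exact absurd (hkey t₂ ht₂ t₁ ht₁ hx.symm h) (fun h => h)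
  calc A.card ≤ (B ∪ (A \ B)).card := by
        apply Finset.card_le_card
        intro t ht
        rw [Finset.mem_union, Finset.mem_sdiff]
        tauto
    _ ≤ B.card + (A \ B).card := Finset.card_union_le _ _
    _ ≤ B.card + Fintype.card X := by omega
end

section
/- Let X be a finite set and x₁, …, x_T a sequence in X with T = M·τ for positive integers M (number of episodes) and τ (episode length); set t_k := (k−1)·τ so that episode k consists of the times t_k+1, …, t_k+τ. For t, and x ∈ X, let n_t(x) := |{s ∈ {1,…,t−1} : x_s = x}|. Fix d > 0 and ε > 0, let h(d,ε) := √(d·ε²/(d+ε²)), and let h^{(τ)}(d,ε) be the τ-fold composition of ε ↦ h(d,ε) applied to ε. Then |{ (k,i) : 1 ≤ k ≤ M, 1 ≤ i ≤ τ, n_{t_k}(x_{t_k+i}) = 0 or d > n_{t_k}(x_{t_k+i})·h^{(τ)}(d,ε)² }| ≤ |{ (k,i) : 1 ≤ k ≤ M, 1 ≤ i ≤ τ, n_{t_k}(x_{t_k+i}) = 0 or d > n_{t_k}(x_{t_k+i})·ε² }| + 2·τ·|X|. -/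
open Finset
open scoped Classical

/-!
With `h(e) = √(d e² / (d + e²))` one has `h(e)⁻² = e⁻² + d⁻¹`, so
`h^{(τ)}(d, ε)² = d ε² / (d + τ ε²)` and `d > n · h^{(τ)}(d, ε)²` says `n ε² < d + τ ε²`.
A pair `(k, i)` counted on the left but not on the right thus has `n_{t_k}(y)`, `y = x_{t_k+i}`,
in the window `[A, A + τ)` with `A = ⌈d / ε²⌉`. For fixed `y` these pairs are distinct visits
to `y`, so the counts `n_{t_k+i}(y)` are pairwise distinct, and they lie in `[A, A + 2τ)`:
at most `2τ` pairs per `y`.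
-/

section VisitCount

variable {X : Type*} (x : ℕ → X) (y : X)

/-- The paper's `n_t(y)`. -/
noncomputable def visitCount (t : ℕ) : ℕ := #{s ∈ Ico 1 t | x s = y}

theorem visitCount_mono : Monotone (visitCount x y) := fun _ _ h =>
  card_le_card (filter_subset_filter _ (Ico_subset_Ico_right h))

theorem visitCount_add_le (t j : ℕ) : visitCount x y (t + j) ≤ visitCount x y t + j :=
  calc visitCount x y (t + j) ≤ #({s ∈ Ico 1 t | x s = y} ∪ Ico t (t + j)) := by
        refine card_le_card fun s hs => ?_
        simp only [mem_filter, mem_Ico, mem_union] at hs ⊢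
        rcases lt_or_ge s t with h | h
        exacts [Or.inl ⟨⟨hs.1.1, h⟩, hs.2⟩, Or.inr ⟨h, hs.1.2⟩]
    _ ≤ visitCount x y t + j := by
        simpa [visitCount] using card_union_le {s ∈ Ico 1 t | x s = y} (Ico t (t + j))

theorem visitCount_strictMonoOn : StrictMonoOn (visitCount x y) {t | 1 ≤ t ∧ x t = y} := by
  rintro a ⟨ha, hxa⟩ b - hab
  refine card_lt_card ((ssubset_iff_of_subset
    (filter_subset_filter _ (Ico_subset_Ico_right hab.le))).2 ⟨a, ?_, ?_⟩) <;> simp [ha, hab, hxa]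

end VisitCount

theorem Nat.eq_and_eq_of_mul_add_eq {τ k i k' i' : ℕ} (hi : i < τ) (hi' : i' < τ)
    (h : k * τ + i = k' * τ + i') : k = k' ∧ i = i' := by
  have hτ : 0 < τ := by omega
  obtain ⟨hq, hr⟩ := (Nat.div_mod_unique hτ).2 ⟨(by ring : i + τ * k = k * τ + i), hi⟩
  obtain ⟨hq', hr'⟩ := (Nat.div_mod_unique hτ).2 ⟨(by ring : i' + τ * k' = k' * τ + i'), hi'⟩
  rw [h] at hq hr
  exact ⟨hq.symm.trans hq', hr.symm.trans hr'⟩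

theorem episodeTime_injOn (τ : ℕ) :
    Set.InjOn (fun ki : ℕ × ℕ => (ki.1 - 1) * τ + ki.2) (Set.Ici 1 ×ˢ Set.Icc 1 τ) := by
  rintro ⟨k, i⟩ ⟨hk, hi, hiτ⟩ ⟨k', i'⟩ ⟨hk', hi', hiτ'⟩ h
  obtain ⟨hkk', hii'⟩ := Nat.eq_and_eq_of_mul_add_eq (k := k - 1) (k' := k' - 1)
    (i := i - 1) (i' := i' - 1) (τ := τ) (by omega) (by omega) (by simp only at h; omega)
  simp only [Set.mem_Ici] at hk hk'
  exact Prod.ext (by omega) (by omega)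

theorem sq_iterate_eq_div {d : ℝ} (hd : 0 < d) (ε : ℝ) (j : ℕ) :
    ((fun e : ℝ => √(d * e ^ 2 / (d + e ^ 2)))^[j] ε) ^ 2 = d * ε ^ 2 / (d + j * ε ^ 2) := by
  induction j with
  | zero => simp [hd.ne']
  | succ j ih =>
    have hD : 0 < d + j * ε ^ 2 := by positivity
    rw [Function.iterate_succ_apply', Real.sq_sqrt (by positivity), ih]
    field_simp
    push_cast
    ring

theorem eq_zero_or_mul_sq_iterate_lt_iff {d : ℝ} (hd : 0 < d) (ε : ℝ) (n j : ℕ) :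
    (n = 0 ∨ d > n * ((fun e : ℝ => √(d * e ^ 2 / (d + e ^ 2)))^[j] ε) ^ 2) ↔
      n * ε ^ 2 < d + j * ε ^ 2 := by
  have hD : 0 < d + j * ε ^ 2 := by positivity
  rw [or_iff_right_of_imp (by rintro rfl; simpa using hd), sq_iterate_eq_div hd, gt_iff_lt,
    show (n : ℝ) * (d * ε ^ 2 / (d + j * ε ^ 2)) = d * (n * ε ^ 2 / (d + j * ε ^ 2)) by ring,
    mul_lt_iff_lt_one_right hd, div_lt_one hD]

theorem mem_Ico_ceil_of_le_of_lt {d c : ℝ} (hc : 0 < c) {n τ : ℕ} (h₁ : d ≤ n * c)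
    (h₂ : n * c < d + τ * c) : n ∈ Ico ⌈d / c⌉₊ (⌈d / c⌉₊ + τ) := by
  have hn : (n : ℝ) - τ < d / c := by rw [lt_div_iff₀ hc]; linarith
  have hceil := Nat.le_ceil (d / c)
  refine mem_Ico.2 ⟨Nat.ceil_le.2 ((div_le_iff₀ hc).2 h₁), ?_⟩
  exact_mod_cast (show (n : ℝ) < ⌈d / c⌉₊ + τ by linarith)

theorem card_le_of_visitCount_mem_Ico {X : Type*} {x : ℕ → X} {y : X} {τ A : ℕ}
    {S : Finset (ℕ × ℕ)}
    (hS : ∀ ki ∈ S, (1 ≤ ki.1 ∧ ki.2 ∈ Set.Icc 1 τ) ∧ x ((ki.1 - 1) * τ + ki.2) = y ∧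
      visitCount x y ((ki.1 - 1) * τ) ∈ Ico A (A + τ)) :
    #S ≤ 2 * τ := by
  have hmaps : ∀ ki ∈ S, visitCount x y ((ki.1 - 1) * τ + ki.2) ∈ Ico A (A + 2 * τ) := by
    intro ki hki
    obtain ⟨⟨-, -, hi⟩, -, hn⟩ := hS ki hki
    have := visitCount_mono x y (Nat.le_add_right ((ki.1 - 1) * τ) ki.2)
    have := visitCount_add_le x y ((ki.1 - 1) * τ) ki.2
    simp only [mem_Ico] at hn ⊢
    omega
  have hinj : Set.InjOn (fun ki : ℕ × ℕ => visitCount x y ((ki.1 - 1) * τ + ki.2)) S :=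
    (visitCount_strictMonoOn x y).injOn.comp
      ((episodeTime_injOn τ).mono fun ki hki => (hS ki hki).1)
      fun ki hki => ⟨by have := (hS ki hki).1.2.1; omega, (hS ki hki).2.1⟩
  simpa using card_le_card_of_injOn _ hmaps hinj

theorem card_filter_visitCount_window_le {X : Type*} [Fintype X] (x : ℕ → X) (M τ : ℕ)
    {d c : ℝ} (hc : 0 < c) :
    #{ki ∈ Icc 1 M ×ˢ Icc 1 τ |
      d ≤ visitCount x (x ((ki.1 - 1) * τ + ki.2)) ((ki.1 - 1) * τ) * c ∧
      visitCount x (x ((ki.1 - 1) * τ + ki.2)) ((ki.1 - 1) * τ) * c < d + τ * c}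
      ≤ 2 * τ * Fintype.card X := by
  rw [← card_univ]
  refine card_le_mul_card_image_of_maps_to (f := fun ki => x ((ki.1 - 1) * τ + ki.2))
    (fun _ _ => mem_univ _) _ fun y _ =>
      card_le_of_visitCount_mem_Ico (x := x) (y := y) (A := ⌈d / c⌉₊) fun ki hki => ?_
  simp only [mem_filter, mem_product, mem_Icc] at hki
  obtain ⟨⟨⟨⟨hk, -⟩, hi⟩, hlo, hhi⟩, rfl⟩ := hki
  exact ⟨⟨hk, hi⟩, rfl, mem_Ico_ceil_of_le_of_lt hc hlo hhi⟩

theorem count_large_ratio_episodic_le_general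
    {X : Type*} [Fintype X] (M τ : ℕ)
    (x : ℕ → X) (d ε : ℝ) (hd : 0 < d) (hε : 0 < ε) :
    (((Finset.Icc 1 M) ×ˢ (Finset.Icc 1 τ)).filter (fun ki =>
        ((Finset.Ico 1 ((ki.1 - 1) * τ)).filter
            (fun s => x s = x ((ki.1 - 1) * τ + ki.2))).card = 0 ∨
        d > (((Finset.Ico 1 ((ki.1 - 1) * τ)).filter
            (fun s => x s = x ((ki.1 - 1) * τ + ki.2))).card : ℝ)
              * ((fun e : ℝ => Real.sqrt (d * e ^ 2 / (d + e ^ 2)))^[τ] ε) ^ 2)).card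
    ≤ (((Finset.Icc 1 M) ×ˢ (Finset.Icc 1 τ)).filter (fun ki =>
        ((Finset.Ico 1 ((ki.1 - 1) * τ)).filter
            (fun s => x s = x ((ki.1 - 1) * τ + ki.2))).card = 0 ∨
        d > (((Finset.Ico 1 ((ki.1 - 1) * τ)).filter
            (fun s => x s = x ((ki.1 - 1) * τ + ki.2))).card : ℝ) * ε ^ 2)).card
      + 2 * τ * Fintype.card X := by
  rw [filter_congr fun ki _ => eq_zero_or_mul_sq_iterate_lt_iff hd ε _ τ]
  have hwindow := card_filter_visitCount_window_le x M τ (d := d) (pow_pos hε 2)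
  refine (card_le_card fun ki hki => ?_).trans
    ((card_union_le _ _).trans (Nat.add_le_add_left hwindow _))
  simp only [mem_filter, mem_union] at hki ⊢
  rcases lt_or_ge _ d with hlt | hge
  · exact Or.inl ⟨hki.1, Or.inr hlt⟩
  · exact Or.inr ⟨hki.1, hge, hki.2⟩

/-- Corollary 3 (episodic concentration for √(d/n_{t_k}(x))): with episode starts
t_k = (k−1)·τ, counts n_t(x) := |{s < t : x_s = x}|, h(d,ε) := √(dε²/(d+ε²)) and
h^{(τ)}(d,·) its τ-fold composition, the number of pairs (k,i) with
√(d/n_{t_k}(x_{t_k+i})) > h^{(τ)}(d,ε) exceeds the number with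
√(d/n_{t_k}(x_{t_k+i})) > ε by at most 2τ|X|.  √(d/n) > c is written as
n = 0 ∨ d > n·c². -/
theorem count_large_ratio_episodic_le
    {X : Type*} [Fintype X] (M τ : ℕ) (hM : 0 < M) (hτ : 0 < τ)
    (x : ℕ → X) (d ε : ℝ) (hd : 0 < d) (hε : 0 < ε) :
    (((Finset.Icc 1 M) ×ˢ (Finset.Icc 1 τ)).filter (fun ki =>
        ((Finset.Ico 1 ((ki.1 - 1) * τ)).filter
            (fun s => x s = x ((ki.1 - 1) * τ + ki.2))).card = 0 ∨
        d > (((Finset.Ico 1 ((ki.1 - 1) * τ)).filter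
            (fun s => x s = x ((ki.1 - 1) * τ + ki.2))).card : ℝ)
              * ((fun e : ℝ => Real.sqrt (d * e ^ 2 / (d + e ^ 2)))^[τ] ε) ^ 2)).card
    ≤ (((Finset.Icc 1 M) ×ˢ (Finset.Icc 1 τ)).filter (fun ki =>
        ((Finset.Ico 1 ((ki.1 - 1) * τ)).filter
            (fun s => x s = x ((ki.1 - 1) * τ + ki.2))).card = 0 ∨
        d > (((Finset.Ico 1 ((ki.1 - 1) * τ)).filter
            (fun s => x s = x ((ki.1 - 1) * τ + ki.2))).card : ℝ) * ε ^ 2)).card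
      + 2 * τ * Fintype.card X :=
  count_large_ratio_episodic_le_general M τ x d ε hd hε
end

section
/- Let X be a finite set and x₁, …, x_T a sequence in X with T = M·τ for positive integers M and τ; set t_k := (k−1)·τ and n_t(x) := |{s ∈ {1,…,t−1} : x_s = x}|. Fix d > 0 and ε > 0. Let (r_{k,i})_{1≤k≤M, 1≤i≤τ} be nonnegative reals such that r_{k,i} ≤ √( d / n_{t_k}(x_{t_k+i}) ) whenever n_{t_k}(x_{t_k+i}) > 0 (no constraint is imposed when n_{t_k}(x_{t_k+i}) = 0). Then |{ (k,i) : r_{k,i} > ε }| ≤ ( d/(τ·ε²) + 1 ) · 2·τ·|X|. -/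
open Finset
open scoped Classical

/-!
Call a pair `(k, i)` large if `ε < r k i`; then `n_{t_k}(x_{t_k+i}) ≤ d / ε²`. Fix a symbol `a` and
let `k` be the last episode containing a large pair with symbol `a`. Every earlier large pair with
symbol `a` occurs at a time `s ≤ t_k` with `x_s = a`, and there are at most `n_{t_k}(a) + 1` such
times; the rest lie in the `τ` steps of episode `k`. So each symbol carries at most
`d / ε² + τ + 1` large pairs, and summing over `X` gives the bound.
-/

section

variable {X : Type*}

/-- The paper's `n_t(a)`. -/
noncomputable def priorCount (x : ℕ → X) (t : ℕ) (a : X) : ℕ := #{s ∈ Ico 1 t | x s = a}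

/-- The paper's `t_k`. -/
def episodeStart (τ k : ℕ) : ℕ := (k - 1) * τ

def episodeTime (τ : ℕ) (q : ℕ × ℕ) : ℕ := episodeStart τ q.1 + q.2

lemma episodeStart_mono (τ : ℕ) : Monotone (episodeStart τ) := fun _ _ h => by
  unfold episodeStart; gcongr

lemma episodeTime_injOn_s11 (M τ : ℕ) :
    Set.InjOn (episodeTime τ) (Icc 1 M ×ˢ Icc 1 τ : Finset (ℕ × ℕ)) := by
  have hdivmod : ∀ q ∈ (Icc 1 M ×ˢ Icc 1 τ : Finset (ℕ × ℕ)),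
      (episodeTime τ q - 1) / τ = q.1 - 1 ∧ (episodeTime τ q - 1) % τ = q.2 - 1 := by
    rintro ⟨k, i⟩ hq
    simp only [mem_product, mem_Icc] at hq
    refine (Nat.div_mod_unique (by omega)).2 ⟨?_, by omega⟩
    simp only [episodeTime, episodeStart]
    rw [mul_comm]
    omega
  intro p hp q hq hpq
  obtain ⟨hp1, hp2⟩ := hdivmod p hp
  obtain ⟨hq1, hq2⟩ := hdivmod q hq
  rw [hpq] at hp1 hp2
  simp only [coe_product, coe_Icc, Set.mem_prod, Set.mem_Icc] at hp hq
  ext <;> omega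

lemma card_le_priorCount_add {x : ℕ → X} {a : X} {S : Finset ℕ} {e τ : ℕ}
    (hS : ∀ s ∈ S, 1 ≤ s ∧ s ≤ e + τ ∧ x s = a) :
    #S ≤ priorCount x e a + (τ + 1) :=
  calc #S ≤ #({s ∈ Ico 1 e | x s = a} ∪ Icc e (e + τ)) := card_le_card fun s hs => by
          obtain ⟨hs1, hs2, hsa⟩ := hS s hs
          simp only [mem_union, mem_filter, mem_Ico, mem_Icc, hsa, and_true]
          omega
    _ ≤ priorCount x e a + (τ + 1) := by
          grw [card_union_le]
          simp only [priorCount, Nat.card_Icc]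
          omega

lemma card_le_of_priorCount_le {x : ℕ → X} {a : X} {M τ N : ℕ} {B : Finset (ℕ × ℕ)}
    (hB : B ⊆ Icc 1 M ×ˢ Icc 1 τ) (hBa : ∀ q ∈ B, x (episodeTime τ q) = a)
    (hN : ∀ q ∈ B, priorCount x (episodeStart τ q.1) a ≤ N) :
    #B ≤ N + (τ + 1) := by
  rcases B.eq_empty_or_nonempty with rfl | hne
  · simp
  obtain ⟨p, hp, hlast⟩ := exists_max_image B Prod.fst hne
  have hS : ∀ s ∈ B.image (episodeTime τ),
      1 ≤ s ∧ s ≤ episodeStart τ p.1 + τ ∧ x s = a := by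
    simp only [mem_image]
    rintro _ ⟨q, hq, rfl⟩
    have hq2 := (mem_product.1 (hB hq)).2
    have hstart := episodeStart_mono τ (hlast q hq)
    simp only [mem_Icc] at hq2
    exact ⟨by unfold episodeTime; omega, by unfold episodeTime; omega, hBa q hq⟩
  calc #B = #(B.image (episodeTime τ)) :=
        (card_image_of_injOn ((episodeTime_injOn_s11 M τ).mono (coe_subset.2 hB))).symm
    _ ≤ priorCount x (episodeStart τ p.1) a + (τ + 1) := card_le_priorCount_add hS
    _ ≤ N + (τ + 1) := by grw [hN p hp]

lemma card_le_mul_card_of_priorCount_le [Fintype X] {x : ℕ → X} {M τ N : ℕ}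
    {B : Finset (ℕ × ℕ)} (hB : B ⊆ Icc 1 M ×ˢ Icc 1 τ)
    (hN : ∀ q ∈ B, priorCount x (episodeStart τ q.1) (x (episodeTime τ q)) ≤ N) :
    #B ≤ (N + (τ + 1)) * Fintype.card X :=
  card_le_mul_card_image_of_maps_to (f := x ∘ episodeTime τ) (fun _ _ => mem_univ _) _
    fun _ _ => card_le_of_priorCount_le ((filter_subset _ _).trans hB)
      (fun _ hq => (mem_filter.1 hq).2)
      (fun q hq => (mem_filter.1 hq).2 ▸ hN q (mem_filter.1 hq).1)

lemma le_floor_div_sq_of_lt_sqrt_div {d ε : ℝ} {n : ℕ} (hε : 0 < ε)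
    (h : 0 < n → ε < √(d / n)) : n ≤ ⌊d / ε ^ 2⌋₊ := by
  rcases n.eq_zero_or_pos with rfl | hn
  · exact Nat.zero_le _
  have hsq : ε ^ 2 < d / n := (Real.lt_sqrt hε.le).1 (h hn)
  rw [lt_div_iff₀ (by exact_mod_cast hn)] at hsq
  exact Nat.le_floor ((le_div_iff₀ (by positivity)).2 (by linarith))

end

theorem count_large_radii_le_general
    {X : Type*} [Fintype X] (M τ : ℕ) (hτ : 0 < τ)
    (x : ℕ → X) (d ε : ℝ) (hd : 0 < d) (hε : 0 < ε)
    (r : ℕ → ℕ → ℝ)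
    (hr : ∀ k ∈ Finset.Icc 1 M, ∀ i ∈ Finset.Icc 1 τ,
        0 < ((Finset.Ico 1 ((k - 1) * τ)).filter
              (fun s => x s = x ((k - 1) * τ + i))).card →
        r k i ≤ Real.sqrt (d / (((Finset.Ico 1 ((k - 1) * τ)).filter
              (fun s => x s = x ((k - 1) * τ + i))).card : ℝ))) :
    (((((Finset.Icc 1 M) ×ˢ (Finset.Icc 1 τ)).filter
        (fun ki => ε < r ki.1 ki.2)).card : ℝ))
      ≤ (d / (τ * ε ^ 2) + 1) * (2 * τ * Fintype.card X) := by
  set N := ⌊d / ε ^ 2⌋₊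
  have hcount : #{q ∈ Icc 1 M ×ˢ Icc 1 τ | ε < r q.1 q.2} ≤ (N + (τ + 1)) * Fintype.card X := by
    refine card_le_mul_card_of_priorCount_le (x := x) (filter_subset _ _) fun q hq => ?_
    obtain ⟨hqP, hlarge⟩ := mem_filter.1 hq
    obtain ⟨hk, hi⟩ := mem_product.1 hqP
    exact le_floor_div_sq_of_lt_sqrt_div hε fun hn => hlarge.trans_le (hr _ hk _ hi hn)
  have hN : (N : ℝ) ≤ d / ε ^ 2 := Nat.floor_le (by positivity)
  have hτ1 : (1 : ℝ) ≤ τ := by exact_mod_cast hτ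
  calc (#{q ∈ Icc 1 M ×ˢ Icc 1 τ | ε < r q.1 q.2} : ℝ)
      ≤ (N + (τ + 1)) * Fintype.card X := by exact_mod_cast hcount
    _ ≤ (2 * (d / ε ^ 2) + 2 * τ) * Fintype.card X := by
        gcongr
        · linarith [div_nonneg hd.le (sq_nonneg ε)]
        · linarith
    _ = (d / (τ * ε ^ 2) + 1) * (2 * τ * Fintype.card X) := by
        field_simp

/-- Lemma 5 (Bounding the number of large radii): with episode starts t_k = (k−1)·τ and
counts n_t(x) := |{s < t : x_s = x}|, if 0 ≤ r_{k,i} ≤ √(d/n_{t_k}(x_{t_k+i})) whenever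
n_{t_k}(x_{t_k+i}) > 0, then the number of pairs (k,i) with r_{k,i} > ε is less than
(d/(τε²) + 1)·2τ|X|. -/
theorem count_large_radii_le
    {X : Type*} [Fintype X] (M τ : ℕ) (hM : 0 < M) (hτ : 0 < τ)
    (x : ℕ → X) (d ε : ℝ) (hd : 0 < d) (hε : 0 < ε)
    (r : ℕ → ℕ → ℝ)
    (hr0 : ∀ k i, 0 ≤ r k i)
    (hr : ∀ k ∈ Finset.Icc 1 M, ∀ i ∈ Finset.Icc 1 τ,
        0 < ((Finset.Ico 1 ((k - 1) * τ)).filter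
              (fun s => x s = x ((k - 1) * τ + i))).card →
        r k i ≤ Real.sqrt (d / (((Finset.Ico 1 ((k - 1) * τ)).filter
              (fun s => x s = x ((k - 1) * τ + i))).card : ℝ))) :
    (((((Finset.Icc 1 M) ×ˢ (Finset.Icc 1 τ)).filter
        (fun ki => ε < r ki.1 ki.2)).card : ℝ))
      ≤ (d / (τ * ε ^ 2) + 1) * (2 * τ * Fintype.card X) :=
  count_large_radii_le_general M τ hτ x d ε hd hε r hr
end
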